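/- Let G be a finite p-group (p prime) such that every connected component of the proper power graph P*(G) is a clique. Then the set of prime divisors of κ(G) is exactly {p} (assuming κ(G) > 1). -/

import Mathlib

/-!
Root every spanning tree at a vertex `r` and send each other vertex to its neighbour on the path
to `r`: spanning trees of a graph are the same as its parent maps, the self-maps fixing `r` whose
orbits all reach `r` and which move every other vertex to a neighbour. When the components of
`P*(G)` are cliques, a parent map of `P(G)` rooted at `1` is an independent choice of a parent map
on each block `C ∪ {1}`, `C` a component, with no adjacency condition left inside the block; and
such a block is a cyclic subgroup, of order `n = p ^ k`. Joyal's bijection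
`{f | f r = r} ≃ {parent maps} × V` shows that `n` times the number of parent maps on an `n`-set
is `n ^ (n - 1)`, a power of `p`. So `κ(G)` is a product of powers of `p`.
-/

/-- The power graph of a group: distinct `x, y` adjacent iff one generates a
subgroup containing the other. -/
def powerGraph (G : Type*) [Group G] : SimpleGraph G where
  Adj x y := x ≠ y ∧ (x ∈ Subgroup.zpowers y ∨ y ∈ Subgroup.zpowers x)
  symm := ⟨fun x y h => ⟨h.1.symm, h.2.symm⟩⟩
  loopless := ⟨fun x h => h.1 rfl⟩

/-- The proper power graph: the power graph with the identity vertex removed. -/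
def properPowerGraph (G : Type*) [Group G] : SimpleGraph {g : G // g ≠ 1} :=
  (powerGraph G).induce {g : G | g ≠ 1}

/-- The tree-number (complexity): number of spanning trees of a graph. -/
noncomputable def SimpleGraph.treeNumber {V : Type*} (Γ : SimpleGraph V) : ℕ :=
  Nat.card {H : Γ.Subgraph // H.IsSpanning ∧ H.coe.IsTree}

open Function Set

lemma Nat.card_subtype_ne_add_one {α : Type*} [Finite α] (a : α) :
    Nat.card {x // x ≠ a} + 1 = Nat.card α := by
  have := Fintype.ofFinite α
  classical
  rw [Nat.card_eq_fintype_card, Nat.card_eq_fintype_card, Fintype.card_subtype_compl,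
    Fintype.card_subtype_eq]
  have := Fintype.card_pos_iff.2 ⟨a⟩
  omega

namespace Function

variable {α : Type*} {f g : α → α} {r x : α} {s : Set α}

structure IsParentMap (r : α) (f : α → α) : Prop where
  map_root : f r = r
  exists_iterate_eq : ∀ x, ∃ n, f^[n] x = r

lemma mem_periodicPts_of_iterate_eq {i j : ℕ} (hij : i < j) (h : f^[i] x = f^[j] x) :
    f^[i] x ∈ periodicPts f := by
  refine mk_mem_periodicPts (Nat.sub_pos_of_lt hij) ?_
  rw [IsPeriodicPt, IsFixedPt, ← iterate_add_apply, Nat.sub_add_cancel hij.le, h]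

lemma exists_iterate_mem_periodicPts [Finite α] (f : α → α) (x : α) :
    ∃ n, f^[n] x ∈ periodicPts f := by
  obtain ⟨i, j, h, hne⟩ : ∃ i j, f^[i] x = f^[j] x ∧ i ≠ j := by
    simpa [Injective] using not_injective_infinite_finite (f^[·] x)
  rcases Nat.lt_or_gt_of_ne hne with hij | hij
  · exact ⟨i, mem_periodicPts_of_iterate_eq hij h⟩
  · exact ⟨j, mem_periodicPts_of_iterate_eq hij h.symm⟩

lemma mem_of_mem_periodicPts_of_iterate_mem (hs : MapsTo f s s) (hx : x ∈ periodicPts f)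
    {t : ℕ} (ht : f^[t] x ∈ s) : x ∈ s := by
  obtain ⟨n, hn, hper⟩ := hx
  obtain ⟨m, rfl⟩ : ∃ m, n = m + 1 := ⟨n - 1, by omega⟩
  have h := hs.iterate (m * t) ht
  rwa [← iterate_add_apply, ← add_one_mul, (hper.mul_const t).eq] at h

lemma eq_of_mem_periodicPts_of_iterate_eq (hr : f r = r) (hx : x ∈ periodicPts f) {t : ℕ}
    (ht : f^[t] x = r) : x = r :=
  mem_of_mem_periodicPts_of_iterate_mem (s := {r}) (mapsTo_singleton.2 hr) hx ht

lemma subset_periodicPts_of_injOn (hs : MapsTo f s s) (hinj : InjOn f s) (hfin : s.Finite) :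
    s ⊆ periodicPts f := by
  intro x hx
  have := hfin.to_subtype
  obtain ⟨n, hn, hper⟩ := (hs.restrict_inj.2 hinj).mem_periodicPts ⟨x, hx⟩
  refine mk_mem_periodicPts hn ?_
  simpa [IsPeriodicPt, IsFixedPt, Subtype.ext_iff, hs.coe_iterate_restrict] using hper

lemma iterate_eq_of_forall_iterate_notMem (hfg : ∀ y ∉ s, f y = g y) (hx : ∀ n, f^[n] x ∉ s)
    (n : ℕ) : f^[n] x = g^[n] x := by
  induction n with
  | zero => rfl
  | succ n ih => rw [iterate_succ_apply', iterate_succ_apply', hfg _ (hx n), ih]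

lemma isParentMap_of_periodicPts_subset [Finite α] (hr : f r = r) (h : periodicPts f ⊆ {r}) :
    IsParentMap r f :=
  ⟨hr, fun x => let ⟨n, hn⟩ := exists_iterate_mem_periodicPts f x; ⟨n, h hn⟩⟩

namespace IsParentMap

lemma eq_root_of_mem_periodicPts (hf : IsParentMap r f) (hx : x ∈ periodicPts f) : x = r :=
  let ⟨_, ht⟩ := hf.exists_iterate_eq x
  eq_of_mem_periodicPts_of_iterate_eq hf.map_root hx ht

lemma apply_ne_self (hf : IsParentMap r f) (hx : x ≠ r) : f x ≠ x := fun h =>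
  hx (hf.eq_root_of_mem_periodicPts (mk_mem_periodicPts one_pos (IsFixedPt.isPeriodicPt h 1)))

lemma apply_apply_ne_self (hf : IsParentMap r f) (hx : x ≠ r) : f (f x) ≠ x := fun h =>
  hx (hf.eq_root_of_mem_periodicPts (mk_mem_periodicPts two_pos h))

open scoped Classical in
noncomputable def depth (hf : IsParentMap r f) (x : α) : ℕ := Nat.find (hf.exists_iterate_eq x)

lemma iterate_depth (hf : IsParentMap r f) (x : α) : f^[hf.depth x] x = r := by
  classical exact Nat.find_spec (hf.exists_iterate_eq x)

lemma iterate_ne_of_lt_depth (hf : IsParentMap r f) {i : ℕ} (hi : i < hf.depth x) :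
    f^[i] x ≠ r := by
  classical exact Nat.find_min (hf.exists_iterate_eq x) hi

lemma depth_eq (hf : IsParentMap r f) {n : ℕ} (hn : f^[n] x = r)
    (hlt : ∀ i < n, f^[i] x ≠ r) : hf.depth x = n := by
  classical exact (Nat.find_eq_iff _).2 ⟨hn, hlt⟩

noncomputable def path (hf : IsParentMap r f) (x : α) : List α :=
  (List.range (hf.depth x)).map (f^[·] x)

lemma length_path (hf : IsParentMap r f) (x : α) : (hf.path x).length = hf.depth x := by
  simp [path]

lemma getElem_path (hf : IsParentMap r f) (x : α) {i : ℕ} (hi : i < (hf.path x).length) :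
    (hf.path x)[i] = f^[i] x := by
  simp [path]

lemma root_notMem_path (hf : IsParentMap r f) (x : α) : r ∉ hf.path x := by
  simp only [path, List.mem_map, List.mem_range, not_exists, not_and]
  exact fun i hi => hf.iterate_ne_of_lt_depth hi

lemma nodup_path (hf : IsParentMap r f) (x : α) : (hf.path x).Nodup := by
  refine List.nodup_range.map_on fun i hi j hj h => ?_
  simp only [List.mem_range] at hi hj
  by_contra hne
  rcases Nat.lt_or_gt_of_ne hne with hij | hij
  · exact hf.iterate_ne_of_lt_depth hi
      (hf.eq_root_of_mem_periodicPts (mem_periodicPts_of_iterate_eq hij h))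
  · exact hf.iterate_ne_of_lt_depth hj
      (hf.eq_root_of_mem_periodicPts (mem_periodicPts_of_iterate_eq hij h.symm))

lemma path_append_root (hf : IsParentMap r f) (x : α) :
    hf.path x ++ [r] = (List.range (hf.depth x + 1)).map (f^[·] x) := by
  rw [List.range_succ, List.map_append, path, List.map_singleton, hf.iterate_depth]

end IsParentMap

end Function

section Reroute

variable {α : Type*} [DecidableEq α] {l₁ l₂ : List α} {g : α → α} {x : α}

def reroute (l₁ l₂ : List α) (g : α → α) (x : α) : α :=
  if x ∈ l₁ then l₂.getD (l₁.idxOf x) x else g x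

lemma reroute_getElem (h : l₁.Nodup) (hl : l₂.length = l₁.length) {i : ℕ}
    (hi : i < l₁.length) : reroute l₁ l₂ g l₁[i] = l₂[i] := by
  rw [reroute, if_pos (List.getElem_mem hi), h.idxOf_getElem, List.getD_eq_getElem]

lemma reroute_of_notMem (hx : x ∉ l₁) : reroute l₁ l₂ g x = g x := if_neg hx

end Reroute

section CyclePts

variable {V : Type*} [Finite V] {r x : V} {f : V → V}

variable (r) in
noncomputable def cyclePts (f : V → V) : Finset V := (toFinite (periodicPts f \ {r})).toFinset

lemma mem_cyclePts : x ∈ cyclePts r f ↔ x ∈ periodicPts f ∧ x ≠ r := by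
  simp [cyclePts]

lemma bijOn_cyclePts (hr : f r = r) : BijOn f (cyclePts r f) (cyclePts r f) := by
  have h := (bijOn_periodicPts f).sdiff_singleton
    (mk_mem_periodicPts one_pos (IsFixedPt.isPeriodicPt hr 1))
  rw [hr] at h
  simpa [cyclePts] using h

end CyclePts

section Joyal

variable {V : Type*} [LinearOrder V] {r x : V} {f : V → V}

namespace Function.IsParentMap

/-- The inverse of Joyal's map: the path from `b` to `r` is cut off and coiled up into cycles, its
`i`-th vertex becoming the image of its `i`-th smallest vertex. -/
noncomputable def curl (hf : IsParentMap r f) (b : V) : V → V :=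
  reroute ((hf.path b).toFinset.sort (· ≤ ·)) (hf.path b) f

variable (hf : IsParentMap r f) (b : V)

lemma length_sort_path : ((hf.path b).toFinset.sort (· ≤ ·)).length = (hf.path b).length := by
  rw [Finset.length_sort, List.toFinset_card_of_nodup (hf.nodup_path b)]

lemma curl_sort_getElem {i : ℕ} (hi : i < ((hf.path b).toFinset.sort (· ≤ ·)).length) :
    hf.curl b ((hf.path b).toFinset.sort (· ≤ ·))[i] =
      (hf.path b)[i]'(hf.length_sort_path b ▸ hi) :=
  reroute_getElem (Finset.sort_nodup _ _) (hf.length_sort_path b).symm hi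

lemma curl_of_notMem (hx : x ∉ hf.path b) : hf.curl b x = f x :=
  reroute_of_notMem (by simpa using hx)

lemma curl_root : hf.curl b r = r := by
  rw [hf.curl_of_notMem b (hf.root_notMem_path b), hf.map_root]

lemma exists_sort_path_getElem (hx : x ∈ hf.path b) :
    ∃ i, ∃ hi : i < ((hf.path b).toFinset.sort (· ≤ ·)).length,
      ((hf.path b).toFinset.sort (· ≤ ·))[i] = x :=
  List.getElem_of_mem ((Finset.mem_sort (· ≤ ·)).2 (List.mem_toFinset.2 hx))

lemma mapsTo_curl : MapsTo (hf.curl b) {x | x ∈ hf.path b} {x | x ∈ hf.path b} := by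
  intro x hx
  obtain ⟨i, hi, rfl⟩ := hf.exists_sort_path_getElem b hx
  show _ ∈ hf.path b
  rw [hf.curl_sort_getElem b hi]
  exact List.getElem_mem _

lemma injOn_curl : InjOn (hf.curl b) {x | x ∈ hf.path b} := by
  intro x hx y hy h
  obtain ⟨i, hi, rfl⟩ := hf.exists_sort_path_getElem b hx
  obtain ⟨j, hj, rfl⟩ := hf.exists_sort_path_getElem b hy
  rw [hf.curl_sort_getElem b hi, hf.curl_sort_getElem b hj] at h
  obtain rfl := (hf.nodup_path b).getElem_inj_iff.1 h
  rfl

end Function.IsParentMap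

variable [Finite V]

variable (r) in
noncomputable def cycleList (f : V → V) : List V := ((cyclePts r f).sort (· ≤ ·)).map f

lemma nodup_cycleList (hr : f r = r) : (cycleList r f).Nodup :=
  (Finset.sort_nodup _ _).map_on fun _ hx _ hy h =>
    (bijOn_cyclePts hr).injOn ((Finset.mem_sort _).1 hx) ((Finset.mem_sort _).1 hy) h

lemma mem_cycleList (hr : f r = r) : x ∈ cycleList r f ↔ x ∈ cyclePts r f := by
  simp only [cycleList, List.mem_map, Finset.mem_sort]
  exact ⟨fun ⟨y, hy, hyx⟩ => hyx ▸ (bijOn_cyclePts hr).mapsTo hy,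
    fun hx => (bijOn_cyclePts hr).surjOn hx⟩

lemma root_notMem_cycleList (hr : f r = r) : r ∉ cycleList r f := by
  simp [mem_cycleList hr, mem_cyclePts]

lemma getD_cycleList_append_root {i : ℕ} (hi : i < (cycleList r f).length) :
    (cycleList r f ++ [r]).getD i r = (cycleList r f)[i] := by
  rw [List.getD_eq_getElem _ _ (by simp; omega), List.getElem_append_left hi]

/-- Joyal's map: the cycles of `f` are cut open and laid out, in the order of their sorted
preimages, as one path ending at `r`. -/
noncomputable def straighten (r : V) (f : V → V) : V → V :=
  reroute (cycleList r f) (cycleList r f ++ [r]).tail f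

noncomputable def straightenStart (r : V) (f : V → V) : V := (cycleList r f).headD r

lemma straighten_of_notMem (hx : x ∉ cycleList r f) : straighten r f x = f x :=
  reroute_of_notMem hx

lemma straighten_root (hr : f r = r) : straighten r f r = r := by
  rw [straighten_of_notMem (root_notMem_cycleList hr), hr]

lemma iterate_straighten (hr : f r = r) (i : ℕ) :
    (straighten r f)^[i] (straightenStart r f) = (cycleList r f ++ [r]).getD i r := by
  set l := cycleList r f
  induction i with
  | zero => cases h : l <;> simp [straightenStart, l, h]
  | succ i ih =>
    rw [iterate_succ_apply', ih]
    rcases lt_or_ge i l.length with hi | hi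
    · rw [getD_cycleList_append_root hi, straighten,
        reroute_getElem (nodup_cycleList hr) (by simp) hi, List.getElem_tail,
        List.getD_eq_getElem]
    · have hend : ∀ j ≥ l.length, (l ++ [r]).getD j r = r := by
        intro j hj
        rcases hj.eq_or_lt with rfl | hj
        · simp
        · exact List.getD_eq_default _ _ (by simp; omega)
      rw [hend i hi, straighten_root hr, hend (i + 1) (by omega)]

lemma isParentMap_straighten (hr : f r = r) : IsParentMap r (straighten r f) := by
  set l := cycleList r f
  have hreach : ∀ y ∈ l, ∃ n, (straighten r f)^[n] y = r := by
    intro y hy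
    obtain ⟨i, hi, rfl⟩ := List.getElem_of_mem hy
    refine ⟨l.length - i, ?_⟩
    rw [← getD_cycleList_append_root hi, ← iterate_straighten hr, ← iterate_add_apply,
      Nat.sub_add_cancel hi.le, iterate_straighten hr]
    simp [l]
  refine isParentMap_of_periodicPts_subset (straighten_root hr) fun x hx => ?_
  by_cases hl : ∃ t, (straighten r f)^[t] x ∈ l
  · obtain ⟨t, ht⟩ := hl
    obtain ⟨n, hn⟩ := hreach _ ht
    exact eq_of_mem_periodicPts_of_iterate_eq (straighten_root hr) hx
      (by rwa [← iterate_add_apply] at hn)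
  · push Not at hl
    have hagree := iterate_eq_of_forall_iterate_notMem (f := straighten r f) (g := f)
      (s := {y | y ∈ l}) (fun _ hy => straighten_of_notMem hy) hl
    have hxf : x ∈ periodicPts f := by
      obtain ⟨n, hn, hper⟩ := hx
      exact mk_mem_periodicPts hn (by rw [IsPeriodicPt, IsFixedPt, ← hagree n]; exact hper)
    by_contra hxr
    exact hl 0 ((mem_cycleList hr).2 (mem_cyclePts.2 ⟨hxf, hxr⟩))

lemma path_straighten (hr : f r = r) :
    (isParentMap_straighten hr).path (straightenStart r f) = cycleList r f := by
  have hψ := isParentMap_straighten hr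
  have hd : hψ.depth (straightenStart r f) = (cycleList r f).length := by
    refine hψ.depth_eq (by rw [iterate_straighten hr]; simp) fun i hi => ?_
    rw [iterate_straighten hr, getD_cycleList_append_root hi]
    exact ne_of_mem_of_not_mem (List.getElem_mem hi) (root_notMem_cycleList hr)
  refine List.ext_getElem (by rw [hψ.length_path, hd]) fun i h₁ h₂ => ?_
  rw [hψ.getElem_path, iterate_straighten hr, getD_cycleList_append_root h₂]

lemma curl_straighten (hr : f r = r) :
    (isParentMap_straighten hr).curl (straightenStart r f) = f := by
  have hS : (cycleList r f).toFinset = cyclePts r f := by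
    ext x
    rw [List.mem_toFinset, mem_cycleList hr]
  funext x
  rw [IsParentMap.curl, path_straighten hr, hS]
  by_cases hx : x ∈ cyclePts r f
  · obtain ⟨i, hi, rfl⟩ := List.getElem_of_mem ((Finset.mem_sort (· ≤ ·)).2 hx)
    rw [reroute_getElem (Finset.sort_nodup _ _) (by simp [cycleList]) hi]
    simp [cycleList]
  · rw [reroute_of_notMem (by simpa using hx), straighten_of_notMem (by rwa [mem_cycleList hr])]

namespace Function.IsParentMap

variable (hf : IsParentMap r f) (b : V)

/-- Outside the path from `b` the orbits of `curl` are those of `f`, and so reach `r`. -/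
lemma cyclePts_curl : cyclePts r (hf.curl b) = (hf.path b).toFinset := by
  ext x
  rw [mem_cyclePts, List.mem_toFinset]
  refine ⟨fun ⟨hx, hxr⟩ => ?_, fun hxq => ⟨subset_periodicPts_of_injOn (hf.mapsTo_curl b)
    (hf.injOn_curl b) (List.finite_toSet _) hxq,
    ne_of_mem_of_not_mem hxq (hf.root_notMem_path b)⟩⟩
  by_contra hxq
  by_cases h : ∃ t, (hf.curl b)^[t] x ∈ hf.path b
  · obtain ⟨t, ht⟩ := h
    exact hxq (mem_of_mem_periodicPts_of_iterate_mem (s := {x | x ∈ hf.path b})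
      (hf.mapsTo_curl b) hx ht)
  · push Not at h
    have hagree := iterate_eq_of_forall_iterate_notMem (f := hf.curl b) (g := f)
      (s := {x | x ∈ hf.path b}) (fun _ hy => hf.curl_of_notMem b hy) h
    refine hxr (hf.eq_root_of_mem_periodicPts ?_)
    obtain ⟨n, hn, hper⟩ := hx
    exact mk_mem_periodicPts hn (by rw [IsPeriodicPt, IsFixedPt, ← hagree n]; exact hper)

lemma cycleList_curl : cycleList r (hf.curl b) = hf.path b := by
  rw [cycleList, hf.cyclePts_curl b]
  refine List.ext_getElem (by rw [List.length_map, hf.length_sort_path]) fun i h₁ _ => ?_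
  rw [List.getElem_map, hf.curl_sort_getElem b (by simpa using h₁)]

lemma straighten_curl : straighten r (hf.curl b) = f := by
  funext x
  rw [straighten, hf.cycleList_curl b]
  by_cases hx : x ∈ hf.path b
  · obtain ⟨i, hi, rfl⟩ := List.getElem_of_mem hx
    rw [reroute_getElem (hf.nodup_path b) (by simp) hi, List.getElem_tail]
    simp only [hf.path_append_root, List.getElem_map, List.getElem_range, hf.getElem_path,
      iterate_succ_apply']
  · rw [reroute_of_notMem hx, hf.curl_of_notMem b hx]

lemma straightenStart_curl : straightenStart r (hf.curl b) = b := by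
  rw [straightenStart, hf.cycleList_curl b, path]
  rcases Nat.eq_zero_or_pos (hf.depth b) with h | h
  · simpa [h] using (hf.iterate_depth b).symm
  · obtain ⟨d, hd⟩ := Nat.exists_eq_add_of_lt h
    simp [hd, List.range_succ_eq_map]

end Function.IsParentMap

variable (r) in
noncomputable def joyalEquiv :
    {f : V → V // f r = r} ≃ {f : V → V // IsParentMap r f} × V where
  toFun f := (⟨straighten r f, isParentMap_straighten f.2⟩, straightenStart r f)
  invFun p := ⟨p.1.2.curl p.2, p.1.2.curl_root p.2⟩
  left_inv f := Subtype.ext (curl_straighten f.2)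
  right_inv p :=
    Prod.ext (Subtype.ext (p.1.2.straighten_curl p.2)) (p.1.2.straightenStart_curl p.2)

end Joyal

theorem card_isParentMap_mul_card {V : Type*} [Finite V] (r : V) :
    Nat.card {f : V → V // IsParentMap r f} * Nat.card V = Nat.card V ^ (Nat.card V - 1) := by
  classical
  let : LinearOrder V := LinearOrder.lift' _ (Finite.equivFin V).injective
  have hfix : {f : V → V // f r = r} ≃ ({x // ¬x = r} → V) :=
    (Equiv.subtypeEquivRight fun f => ⟨fun h => funext fun ⟨x, hx⟩ => hx ▸ h,
      fun h => congrFun h ⟨r, rfl⟩⟩).trans (Equiv.subtypePreimage (· = r) fun _ => r)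
  have hcompl : Nat.card {x // ¬x = r} = Nat.card V - 1 := by
    have := Nat.card_subtype_ne_add_one r
    simp only [ne_eq] at this
    omega
  rw [← Nat.card_prod, ← Nat.card_congr (joyalEquiv r), Nat.card_congr hfix, Nat.card_fun,
    hcompl]

theorem exists_card_isParentMap_eq_pow {V : Type*} [Finite V] {p k : ℕ} (hp : p.Prime) (r : V)
    (hV : Nat.card V = p ^ k) : ∃ j, Nat.card {f : V → V // IsParentMap r f} = p ^ j := by
  have h := card_isParentMap_mul_card r
  rw [hV, ← pow_mul] at h
  obtain ⟨j, -, hj⟩ := (Nat.dvd_prime_pow hp).1 (Dvd.intro _ h)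
  exact ⟨j, hj⟩

namespace SimpleGraph

variable {W : Type*} {f : W → W} {x y : W}

def funGraph (f : W → W) : SimpleGraph W := fromRel fun x y => f x = y

lemma funGraph_adj : (funGraph f).Adj x y ↔ x ≠ y ∧ (f x = y ∨ f y = x) := fromRel_adj _ _ _

end SimpleGraph

open SimpleGraph

namespace Function.IsParentMap

variable {W : Type*} {f g : W → W} {r : W}

lemma funGraph_le_iff (hf : IsParentMap r f) {Γ : SimpleGraph W} :
    funGraph f ≤ Γ ↔ ∀ x, x ≠ r → Γ.Adj x (f x) := by
  have hne : ∀ {x}, f x ≠ x → x ≠ r := fun h hx => h (hx ▸ hf.map_root)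
  refine ⟨fun h x hx => h (funGraph_adj.2 ⟨(hf.apply_ne_self hx).symm, Or.inl rfl⟩),
    fun h x y hxy => ?_⟩
  obtain ⟨hxy, rfl | rfl⟩ := funGraph_adj.1 hxy
  · exact h x (hne hxy.symm)
  · exact (h y (hne hxy)).symm

lemma reachable_funGraph (hf : IsParentMap r f) (x : W) : (funGraph f).Reachable x r := by
  obtain ⟨n, hn⟩ := hf.exists_iterate_eq x
  induction n generalizing x with
  | zero => exact hn ▸ Reachable.refl x
  | succ n ih =>
    rw [iterate_succ_apply] at hn
    by_cases hx : f x = x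
    · exact ih x (hx ▸ hn)
    · exact (funGraph_adj.2 ⟨Ne.symm hx, Or.inl rfl⟩).reachable.trans (ih (f x) hn)

noncomputable def nonRootEquivEdgeSet (hf : IsParentMap r f) :
    {x // x ≠ r} ≃ (funGraph f).edgeSet := by
  refine Equiv.ofBijective
    (fun x => ⟨s(x.1, f x.1), funGraph_adj.2 ⟨(hf.apply_ne_self x.2).symm, Or.inl rfl⟩⟩)
    ⟨fun x y hxy => ?_, fun ⟨e, he⟩ => ?_⟩
  · rcases Sym2.eq_iff.1 (congrArg Subtype.val hxy) with ⟨h, -⟩ | ⟨h₁, h₂⟩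
    · exact Subtype.ext h
    · exact absurd (by rw [h₂, h₁]) (hf.apply_apply_ne_self x.2)
  · revert he
    refine Sym2.inductionOn e fun a b he => ?_
    obtain ⟨hab, rfl | rfl⟩ := funGraph_adj.1 ((mem_edgeSet _).1 he)
    · exact ⟨⟨a, fun ha => hab (by rw [ha, hf.map_root])⟩, rfl⟩
    · exact ⟨⟨b, fun hb => hab (by rw [hb, hf.map_root])⟩, Subtype.ext Sym2.eq_swap⟩

lemma isTree_funGraph [Finite W] (hf : IsParentMap r f) : (funGraph f).IsTree := by
  have hconn : (funGraph f).Connected := (connected_iff_exists_forall_reachable _).2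
    ⟨r, fun x => (hf.reachable_funGraph x).symm⟩
  refine isTree_iff_connected_and_card.2 ⟨hconn, ?_⟩
  rw [← Nat.card_congr hf.nonRootEquivEdgeSet, Nat.card_subtype_ne_add_one]

/-- If `f x ≠ g x`, then `f (g x) = x` and `f` and `g` again differ at `g x`; so the `g`-orbit of
`x` would never reach `r`. -/
lemma eq_of_funGraph_eq (hf : IsParentMap r f) (hg : IsParentMap r g)
    (h : funGraph f = funGraph g) : f = g := by
  have step : ∀ x, x ≠ r → f x ≠ g x → g x ≠ r ∧ f (g x) ≠ g (g x) := by
    intro x hx hne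
    have hadj : (funGraph f).Adj x (g x) :=
      h ▸ funGraph_adj.2 ⟨(hg.apply_ne_self hx).symm, Or.inl rfl⟩
    have hfg : f (g x) = x := (funGraph_adj.1 hadj).2.resolve_left hne
    refine ⟨fun hgx => hx (by rw [← hfg, hgx, hf.map_root]), fun h' => ?_⟩
    exact hg.apply_apply_ne_self hx (by rw [← h', hfg])
  funext x
  by_contra hne
  have hx : x ≠ r := fun hx => hne (by rw [hx, hf.map_root, hg.map_root])
  have hbad : ∀ k, g^[k] x ≠ r ∧ f (g^[k] x) ≠ g (g^[k] x) := by
    intro k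
    induction k with
    | zero => exact ⟨hx, hne⟩
    | succ k ih => rw [iterate_succ_apply']; exact step _ ih.1 ih.2
  obtain ⟨n, hn⟩ := hg.exists_iterate_eq x
  exact (hbad n).1 hn

end Function.IsParentMap

namespace SimpleGraph.IsTree

variable {W : Type*} {T : SimpleGraph W} {r x : W}

/-- `Walk.snd` of the empty walk is its endpoint, so `parent r r = r`. -/
noncomputable def parent (hT : T.IsTree) (r x : W) : W := (hT.existsUnique_path x r).choose.snd

lemma parent_eq_snd (hT : T.IsTree) {p : T.Walk x r} (hp : p.IsPath) :
    hT.parent r x = p.snd := by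
  rw [parent, (hT.existsUnique_path x r).unique (hT.existsUnique_path x r).choose_spec.1 hp]

lemma iterate_parent_length (hT : T.IsTree) :
    ∀ {x} (p : T.Walk x r), p.IsPath → (hT.parent r)^[p.length] x = r
  | _, .nil, _ => rfl
  | _, .cons _ q, hp => by
    rw [Walk.length_cons, iterate_succ_apply, hT.parent_eq_snd hp, Walk.snd_cons]
    exact hT.iterate_parent_length q hp.of_cons

lemma isParentMap_parent (hT : T.IsTree) (r : W) : IsParentMap r (hT.parent r) where
  map_root := hT.parent_eq_snd Walk.IsPath.nil
  exists_iterate_eq x :=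
    let ⟨p, hp, _⟩ := hT.existsUnique_path x r
    ⟨p.length, hT.iterate_parent_length p hp⟩

lemma adj_parent (hT : T.IsTree) (hx : x ≠ r) : T.Adj x (hT.parent r x) := by
  obtain ⟨p, hp, _⟩ := hT.existsUnique_path x r
  rw [hT.parent_eq_snd hp]
  exact p.adj_snd (Walk.not_nil_of_ne hx)

lemma funGraph_parent (hT : T.IsTree) (r : W) : funGraph (hT.parent r) = T := by
  ext x y
  rw [funGraph_adj]
  have hroot := (hT.isParentMap_parent r).map_root
  refine ⟨fun ⟨hxy, h⟩ => ?_, fun hxy => ⟨hxy.ne, ?_⟩⟩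
  · rcases h with h | h
    · exact h ▸ hT.adj_parent fun hx => hxy (by rw [← h, hx, hroot])
    · exact (h ▸ hT.adj_parent fun hy => hxy (by rw [← h, hy, hroot])).symm
  obtain ⟨p, hp, _⟩ := hT.existsUnique_path x r
  by_cases hy : y ∈ p.support
  · exact Or.inl ((hT.parent_eq_snd hp).trans (hT.isAcyclic.eq_snd_of_adj_start hp hxy hy).symm)
  · exact Or.inr ((hT.parent_eq_snd (hp.cons hy : (Walk.cons hxy.symm p).IsPath)).trans
      (Walk.snd_cons _ _))

end SimpleGraph.IsTree

namespace SimpleGraph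

variable {W : Type*} (Γ : SimpleGraph W)

def spanningTreesEquiv : {H : Γ.Subgraph // H.IsSpanning ∧ H.coe.IsTree} ≃
    {T : SimpleGraph W // T ≤ Γ ∧ T.IsTree} where
  toFun H := ⟨H.1.spanningCoe, H.1.spanningCoe_le,
    (Subgraph.spanningCoeEquivCoeOfSpanning H.1 H.2.1).isTree_iff.2 H.2.2⟩
  invFun T := ⟨toSubgraph T.1 T.2.1, toSubgraph.isSpanning _ _,
    (Subgraph.spanningCoeEquivCoeOfSpanning _ (toSubgraph.isSpanning _ _)).isTree_iff.1 T.2.2⟩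
  left_inv H := Subtype.ext (Subgraph.ext (Subgraph.isSpanning_iff.1 H.2.1).symm rfl)
  right_inv _ := rfl

theorem treeNumber_eq_card_isParentMap [Finite W] (r : W) :
    Γ.treeNumber =
      Nat.card {f : W → W // IsParentMap r f ∧ ∀ x, x ≠ r → Γ.Adj x (f x)} := by
  rw [treeNumber, Nat.card_congr (spanningTreesEquiv Γ)]
  refine (Nat.card_eq_of_bijective
    (fun f => ⟨funGraph f.1, f.2.1.funGraph_le_iff.2 f.2.2, f.2.1.isTree_funGraph⟩)
    ⟨fun f g h => Subtype.ext (f.2.1.eq_of_funGraph_eq g.2.1 (congrArg Subtype.val h)),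
      fun T => ⟨⟨T.2.2.parent r, T.2.2.isParentMap_parent r,
        fun _ hx => T.2.1 (T.2.2.adj_parent hx)⟩,
        Subtype.ext (T.2.2.funGraph_parent r)⟩⟩).symm

end SimpleGraph

section Blocks

variable {W ι : Type*} {r : W} (blk : {x // x ≠ r} → ι)

/-- The condition is vacuous for `r`, which therefore lies in every block. -/
def block (i : ι) : Set W := {x | ∀ hx : x ≠ r, blk ⟨x, hx⟩ = i}

lemma root_mem_block (i : ι) : r ∈ block blk i := fun hr => absurd rfl hr

lemma mem_block_self {x : W} (hx : x ≠ r) : x ∈ block blk (blk ⟨x, hx⟩) := fun _ => rfl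

def blockRoot (i : ι) : block blk i := ⟨r, root_mem_block blk i⟩

open scoped Classical in
noncomputable def glueBlocks (g : ∀ i, block blk i → block blk i) (x : W) : W :=
  if hx : x = r then r else (g (blk ⟨x, hx⟩) ⟨x, mem_block_self blk hx⟩).1

variable {blk} {g : ∀ i, block blk i → block blk i}

lemma glueBlocks_apply (hg : ∀ i, g i (blockRoot blk i) = blockRoot blk i) {i : ι}
    (x : block blk i) : glueBlocks blk g x = (g i x).1 := by
  by_cases hx : x.1 = r
  · rw [glueBlocks, dif_pos hx, show x = blockRoot blk i from Subtype.ext hx, hg]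
    rfl
  · have key : ∀ j (hj : j = i) (hxj : x.1 ∈ block blk j),
        (g j ⟨x, hxj⟩).1 = (g i x).1 := by
      rintro j rfl _
      rfl
    rw [glueBlocks, dif_neg hx]
    exact key _ (x.2 hx) _

lemma iterate_glueBlocks (hg : ∀ i, g i (blockRoot blk i) = blockRoot blk i) {i : ι}
    (x : block blk i) (n : ℕ) : (glueBlocks blk g)^[n] x = ((g i)^[n] x).1 := by
  induction n generalizing x with
  | zero => rfl
  | succ n ih => rw [iterate_succ_apply, iterate_succ_apply, glueBlocks_apply hg, ih]

variable (blk) in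
noncomputable def isParentMapBlocksEquiv :
    {f : W → W // IsParentMap r f ∧ ∀ i, MapsTo f (block blk i) (block blk i)} ≃
      ∀ i, {g : block blk i → block blk i // IsParentMap (blockRoot blk i) g} where
  toFun f i := ⟨(f.2.2 i).restrict, Subtype.ext f.2.1.map_root, fun x => by
    obtain ⟨n, hn⟩ := f.2.1.exists_iterate_eq x
    exact ⟨n, Subtype.ext ((f.2.2 i).coe_iterate_restrict x n ▸ hn)⟩⟩
  invFun g := ⟨glueBlocks blk fun i => (g i).1, by
    have hg : ∀ i, (g i).1 (blockRoot blk i) = blockRoot blk i := fun i => (g i).2.map_root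
    refine ⟨⟨dif_pos rfl, fun x => ?_⟩, fun i x hx => ?_⟩
    · by_cases hx : x = r
      · exact ⟨0, hx⟩
      · obtain ⟨n, hn⟩ := (g _).2.exists_iterate_eq ⟨x, mem_block_self blk hx⟩
        exact ⟨n, by rw [iterate_glueBlocks hg ⟨x, mem_block_self blk hx⟩, hn]; rfl⟩
    · rw [glueBlocks_apply hg ⟨x, hx⟩]
      exact ((g i).1 _).2⟩
  left_inv f := by
    refine Subtype.ext (funext fun x => ?_)
    by_cases hx : x = r
    · simp [glueBlocks, hx, f.2.1.map_root]
    · simp only [glueBlocks, dif_neg hx]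
      rfl
  right_inv g := funext fun i => Subtype.ext (funext fun x => Subtype.ext
    (glueBlocks_apply (fun i => (g i).2.map_root) x))

end Blocks

section PowerGraph

variable {G : Type*} [Group G]

lemma powerGraph_adj_one {g : G} (hg : g ≠ 1) : (powerGraph G).Adj g 1 :=
  ⟨hg, Or.inr (Subgroup.one_mem _)⟩

lemma powerGraph_adj_iff_mem_block
    (hcl : ∀ c : (properPowerGraph G).ConnectedComponent, (properPowerGraph G).IsClique c.supp)
    {g u : G} (hg : g ≠ 1) :
    (powerGraph G).Adj g u ↔ u ≠ g ∧ u ∈ block (properPowerGraph G).connectedComponentMk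
      ((properPowerGraph G).connectedComponentMk ⟨g, hg⟩) := by
  refine ⟨fun h => ⟨h.ne.symm, fun hu => ConnectedComponent.sound
    (show (properPowerGraph G).Adj ⟨u, hu⟩ ⟨g, hg⟩ from h.symm).reachable⟩,
    fun ⟨hug, hu⟩ => ?_⟩
  by_cases hu1 : u = 1
  · exact hu1 ▸ powerGraph_adj_one hg
  · exact (hcl _ (hu hu1) rfl fun h => hug (congrArg Subtype.val h) :
      (properPowerGraph G).Adj ⟨u, hu1⟩ ⟨g, hg⟩).symm

lemma isParentMap_powerGraph_iff
    (hcl : ∀ c : (properPowerGraph G).ConnectedComponent, (properPowerGraph G).IsClique c.supp)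
    {f : G → G} (hf : IsParentMap 1 f) :
    (∀ x, x ≠ 1 → (powerGraph G).Adj x (f x)) ↔
      ∀ c, MapsTo f (block (properPowerGraph G).connectedComponentMk c)
        (block (properPowerGraph G).connectedComponentMk c) := by
  refine ⟨fun h c x hx => ?_, fun h x hx =>
    (powerGraph_adj_iff_mem_block hcl hx).2 ⟨hf.apply_ne_self hx, h _ (mem_block_self _ hx)⟩⟩
  by_cases hx1 : x = 1
  · rw [hx1, hf.map_root]
    exact root_mem_block _ c
  · exact hx hx1 ▸ ((powerGraph_adj_iff_mem_block hcl hx1).1 (h x hx1)).2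

/-- The block is generated by any of its elements of maximal order. -/
lemma exists_block_eq_zpowers [Finite G]
    (hcl : ∀ c : (properPowerGraph G).ConnectedComponent, (properPowerGraph G).IsClique c.supp)
    (c : (properPowerGraph G).ConnectedComponent) :
    ∃ z : G, block (properPowerGraph G).connectedComponentMk c = Subgroup.zpowers z := by
  obtain ⟨v, hv⟩ := c.exists_rep
  obtain ⟨z, hz, hmax⟩ :=
    Set.exists_max_image c.supp (fun v => orderOf v.1) (toFinite _) ⟨v, hv⟩
  have hsupp : ∀ x ∈ c.supp, x.1 ∈ Subgroup.zpowers z.1 := by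
    intro x hx
    by_cases hxz : x = z
    · exact hxz ▸ Subgroup.mem_zpowers _
    obtain h | h := (hcl c hx hz hxz).2
    · exact h
    · have hle : Subgroup.zpowers z.1 ≤ Subgroup.zpowers x.1 := Subgroup.zpowers_le.2 h
      have heq := Subgroup.eq_of_le_of_card_ge hle
        (by rw [Nat.card_zpowers, Nat.card_zpowers]; exact hmax x hx)
      exact heq ▸ Subgroup.mem_zpowers _
  refine ⟨z.1, Set.ext fun x => ⟨fun hx => ?_, fun hx hx1 => ?_⟩⟩
  · by_cases hx1 : x = 1
    · rw [hx1]
      exact Subgroup.one_mem _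
    · exact hsupp ⟨x, hx1⟩ (hx hx1)
  · by_cases hxz : x = z.1
    · exact (congrArg _ (Subtype.ext hxz)).trans hz
    · exact (ConnectedComponent.sound
        (show (properPowerGraph G).Adj ⟨x, hx1⟩ z from ⟨hxz, Or.inl hx⟩).reachable).trans hz

lemma exists_card_block_eq_pow [Finite G] {p : ℕ} (hG : ∀ g : G, ∃ n : ℕ, orderOf g = p ^ n)
    (hcl : ∀ c : (properPowerGraph G).ConnectedComponent, (properPowerGraph G).IsClique c.supp)
    (c : (properPowerGraph G).ConnectedComponent) :
    ∃ k, Nat.card (block (properPowerGraph G).connectedComponentMk c) = p ^ k := by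
  obtain ⟨z, hz⟩ := exists_block_eq_zpowers hcl c
  obtain ⟨k, hk⟩ := hG z
  exact ⟨k, by rw [hz, ← hk]; exact Nat.card_zpowers z⟩

end PowerGraph

/-- If `G` is a finite `p`-group all of whose proper power graph components are
cliques, then the set of prime divisors of `κ(G)` is exactly `{p}`
(assuming `κ(G) > 1`). -/
theorem primeFactors_treeNumber_eq (G : Type*) [Group G] [Finite G] (p : ℕ)
    (hp : p.Prime) (hG : ∀ g : G, ∃ n : ℕ, orderOf g = p ^ n)
    (hcl : ∀ c : (properPowerGraph G).ConnectedComponent,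
      (properPowerGraph G).IsClique c.supp)
    (h1 : 1 < (powerGraph G).treeNumber) :
    ((powerGraph G).treeNumber).primeFactors = {p} := by
  have := Fintype.ofFinite (properPowerGraph G).ConnectedComponent
  set blk := (properPowerGraph G).connectedComponentMk
  have hκ : (powerGraph G).treeNumber =
      ∏ c, Nat.card {g : block blk c → block blk c // IsParentMap (blockRoot blk c) g} := by
    rw [treeNumber_eq_card_isParentMap _ 1, ← Nat.card_pi,
      ← Nat.card_congr (isParentMapBlocksEquiv blk)]
    exact Nat.card_congr (Equiv.subtypeEquivRight fun f =>
      and_congr_right fun hf => isParentMap_powerGraph_iff hcl hf)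
  have hfactor : ∀ c, ∃ j,
      Nat.card {g : block blk c → block blk c // IsParentMap (blockRoot blk c) g} = p ^ j :=
    fun c =>
      let ⟨_, hk⟩ := exists_card_block_eq_pow hG hcl c
      exists_card_isParentMap_eq_pow hp _ hk
  choose j hj using hfactor
  rw [hκ, Finset.prod_congr rfl fun c _ => hj c, Finset.prod_pow_eq_pow_sum] at h1 ⊢
  exact Nat.primeFactors_prime_pow (fun h => by simp [h] at h1) hp
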